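/- arXiv:2601.17042 — 2 statements merged into one kernel-verified Lean document; each statement's English description precedes it below -/
import Mathlib

section
/- Let d, n, p, K be positive integers, Z ∈ ℝ^{d×n}, and c > 0. For each k ∈ {1,…,K} let π_k ∈ ℝ^n have nonnegative entries with positive sum n_k = Σ_j (π_k)_j, let U_k ∈ ℝ^{d×p}, let U_k^S ∈ ℝ^{d×p} be obtained from U_k by replacing the columns indexed by some set J_k ⊆ {1,…,p} with zero columns, and let π_k' ∈ ℝ^n satisfy 0 ≤ (π_k')_j ≤ (π_k)_j for all j. Then R^var(Z; {π_k'}, {U_k^S}) ≤ R^var(Z; {π_k}, {U_k}), where R^var(Z; {π}, {U}) = (1/2) Σ_{k=1}^K (n_k/n) Σ_{i=1}^p log(1 + (c/n_k)(U_kᵀ Z Diag(π_k) Zᵀ U_k)_{ii}). Consequently the two coding-rate reductions satisfy R(Z) − R^var(Z; {π_k'}, {U_k^S}) ≥ R(Z) − R^var(Z; {π_k}, {U_k}) for any real number R(Z). Moreover, if there exist k and i with ((U_k^S)ᵀ Z Diag(π_k') Zᵀ U_k^S)_{ii} < (U_kᵀ Z Diag(π_k) Zᵀ U_k)_{ii},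 then the first inequality is strict. -/
open Matrix

/-- The variational compression term
`R^var(Z; {π_k}, {U_k}) = (1/2) Σ_k (n_k/n) Σ_i log(1 + (c/n_k)(U_kᵀ Z Diag(π_k) Zᵀ U_k)_{ii})`,
where `n_k = Σ_j (π_k)_j`. -/
noncomputable def Rvar (d n p K : ℕ) (c : ℝ) (Z : Matrix (Fin d) (Fin n) ℝ)
    (π : Fin K → Fin n → ℝ) (U : Fin K → Matrix (Fin d) (Fin p) ℝ) : ℝ :=
  (1 / 2) * ∑ k : Fin K, ((∑ j, π k j) / (n : ℝ)) *
    ∑ i : Fin p, Real.log (1 + (c / ∑ j, π k j) *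
      ((U k)ᵀ * Z * Matrix.diagonal (π k) * Zᵀ * U k) i i)


lemma log_key (c : ℝ) (hc : 0 < c) {s t A B : ℝ} (hs : 0 ≤ s) (hst : s ≤ t) (ht : 0 < t)
    (hB : 0 ≤ B) (hBA : B ≤ A) :
    s * Real.log (1 + c / s * B) ≤ t * Real.log (1 + c / t * A) := by
  have hA : 0 ≤ A := hB.trans hBA
  have hRHS : 0 ≤ Real.log (1 + c / t * A) := by
    apply Real.log_nonneg
    have : 0 ≤ c / t * A := mul_nonneg (div_nonneg hc.le ht.le) hA
    linarith
  rcases eq_or_lt_of_le hs with h0 | hs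
  · rw [← h0]
    simpa using mul_nonneg ht.le hRHS
  · have step1 : s * Real.log (1 + c / s * B) ≤ s * Real.log (1 + c / s * A) := by
      apply mul_le_mul_of_nonneg_left _ hs.le
      apply Real.log_le_log (by positivity)
      have : 0 < c / s := div_pos hc hs
      nlinarith
    refine step1.trans ?_
    have hx : (0:ℝ) < 1 + c / s * A := by positivity
    have hlam : 0 ≤ s / t := by positivity
    have hmu : 0 ≤ 1 - s / t := by
      have : s / t ≤ 1 := (div_le_one ht).mpr hst
      linarith
    have hsum : s / t + (1 - s / t) = 1 := by ring
    have hconc := (strictConcaveOn_log_Ioi.concaveOn).2 (Set.mem_Ioi.mpr hx)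
      (Set.mem_Ioi.mpr one_pos) hlam hmu hsum
    simp only [smul_eq_mul, Real.log_one, mul_zero, add_zero, mul_one] at hconc
    have harg : s / t * (1 + c / s * A) + (1 - s / t) = 1 + c / t * A := by
      field_simp
      ring
    rw [harg] at hconc
    calc s * Real.log (1 + c / s * A) = t * (s / t * Real.log (1 + c / s * A)) := by
          field_simp
      _ ≤ t * Real.log (1 + c / t * A) := mul_le_mul_of_nonneg_left hconc ht.le

lemma log_key_strict (c : ℝ) (hc : 0 < c) {s t A B : ℝ} (hs : 0 ≤ s) (hst : s ≤ t) (ht : 0 < t)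
    (hB : 0 ≤ B) (hBA : B < A) :
    s * Real.log (1 + c / s * B) < t * Real.log (1 + c / t * A) := by
  have hA : 0 < A := lt_of_le_of_lt hB hBA
  rcases eq_or_lt_of_le hs with h0 | hs
  · rw [← h0]
    have : 0 < c / t * A := mul_pos (div_pos hc ht) hA
    have : 0 < Real.log (1 + c / t * A) := Real.log_pos (by linarith)
    simpa using mul_pos ht this
  · have step1 : s * Real.log (1 + c / s * B) < s * Real.log (1 + c / s * A) := by
      apply mul_lt_mul_of_pos_left _ hs
      apply Real.log_lt_log (by positivity)
      have : 0 < c / s := div_pos hc hs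
      nlinarith
    exact step1.trans_le (log_key c hc hs.le hst ht hA.le le_rfl)

lemma diag_eq {d n p : ℕ} (Z : Matrix (Fin d) (Fin n) ℝ) (σ : Fin n → ℝ)
    (V : Matrix (Fin d) (Fin p) ℝ) (i : Fin p) :
    (Vᵀ * Z * Matrix.diagonal σ * Zᵀ * V) i i = ∑ j, σ j * ((Zᵀ * V) j i) ^ 2 := by
  have h : Vᵀ * Z * Matrix.diagonal σ * Zᵀ * V = (Zᵀ * V)ᵀ * (Matrix.diagonal σ * (Zᵀ * V)) := by
    rw [transpose_mul, transpose_transpose]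
    simp [Matrix.mul_assoc]
  rw [h, Matrix.mul_apply]
  refine Finset.sum_congr rfl fun j _ => ?_
  rw [Matrix.diagonal_mul, transpose_apply]
  ring

/-- **Theorem 1 of the paper.** Decoupling membership and subspaces:
replacing each membership vector `π_k` by a componentwise-smaller nonnegative `π_k'`
and each subspace matrix `U_k` by `U_k^S` (obtained by zeroing the columns indexed by
`J_k`) can only decrease the variational compression term, hence can only increase the
coding rate reduction `R(Z) − R^var`; and the inequality is strict as soon as some
diagonal entry strictly decreases. -/
theorem decoupled_membership_subspace_Rvar_le (d n p K : ℕ)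
    (hd : 0 < d) (hn : 0 < n) (hp : 0 < p) (hK : 0 < K)
    (Z : Matrix (Fin d) (Fin n) ℝ) (c : ℝ) (hc : 0 < c)
    (π π' : Fin K → Fin n → ℝ)
    (hπ : ∀ k j, 0 ≤ π k j) (hsum : ∀ k, 0 < ∑ j, π k j)
    (hπ' : ∀ k j, 0 ≤ π' k j ∧ π' k j ≤ π k j)
    (U US : Fin K → Matrix (Fin d) (Fin p) ℝ)
    (J : Fin K → Finset (Fin p))
    (hUS : ∀ k i j, US k i j = if j ∈ J k then 0 else U k i j) :
    Rvar d n p K c Z π' US ≤ Rvar d n p K c Z π U ∧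
    (∀ R : ℝ, R - Rvar d n p K c Z π U ≤ R - Rvar d n p K c Z π' US) ∧
    ((∃ k i, ((US k)ᵀ * Z * Matrix.diagonal (π' k) * Zᵀ * US k) i i <
        ((U k)ᵀ * Z * Matrix.diagonal (π k) * Zᵀ * U k) i i) →
      Rvar d n p K c Z π' US < Rvar d n p K c Z π U) := by
  -- notation
  set s : Fin K → ℝ := fun k => ∑ j, π' k j with hs_def
  set t : Fin K → ℝ := fun k => ∑ j, π k j with ht_def
  set B : Fin K → Fin p → ℝ := fun k i =>
    ((US k)ᵀ * Z * Matrix.diagonal (π' k) * Zᵀ * US k) i i with hB_def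
  set A : Fin K → Fin p → ℝ := fun k i =>
    ((U k)ᵀ * Z * Matrix.diagonal (π k) * Zᵀ * U k) i i with hA_def
  have hZUS : ∀ k (j : Fin n) (i : Fin p),
      (Zᵀ * US k) j i = if i ∈ J k then 0 else (Zᵀ * U k) j i := by
    intro k j i
    by_cases h : i ∈ J k <;> simp [Matrix.mul_apply, hUS, h]
  have hB0 : ∀ k i, 0 ≤ B k i := by
    intro k i
    rw [hB_def]
    simp only
    rw [diag_eq]
    exact Finset.sum_nonneg fun j _ => mul_nonneg (hπ' k j).1 (sq_nonneg _)
  have hBA : ∀ k i, B k i ≤ A k i := by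
    intro k i
    rw [hB_def, hA_def]
    simp only
    rw [diag_eq, diag_eq]
    refine Finset.sum_le_sum fun j _ => ?_
    rw [hZUS]
    by_cases h : i ∈ J k
    · simp [h]
      exact mul_nonneg (hπ k j) (sq_nonneg _)
    · simp [h]
      exact mul_le_mul_of_nonneg_right (hπ' k j).2 (sq_nonneg _)
  have hs0 : ∀ k, 0 ≤ s k := fun k => Finset.sum_nonneg fun j _ => (hπ' k j).1
  have hst : ∀ k, s k ≤ t k := fun k => Finset.sum_le_sum fun j _ => (hπ' k j).2
  have ht0 : ∀ k, 0 < t k := hsum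
  have hterm : ∀ k i, s k * Real.log (1 + c / s k * B k i)
      ≤ t k * Real.log (1 + c / t k * A k i) := fun k i =>
    log_key c hc (hs0 k) (hst k) (ht0 k) (hB0 k i) (hBA k i)
  -- rewrite Rvar in a per-term form
  have hrw : ∀ (σ : Fin K → Fin n → ℝ) (V : Fin K → Matrix (Fin d) (Fin p) ℝ),
      Rvar d n p K c Z σ V = (1 / 2) * ∑ k : Fin K, (1 / (n : ℝ)) *
        ∑ i : Fin p, ((∑ j, σ k j) * Real.log (1 + c / (∑ j, σ k j) *
          ((V k)ᵀ * Z * Matrix.diagonal (σ k) * Zᵀ * V k) i i)) := by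
    intro σ V
    unfold Rvar
    congr 1
    refine Finset.sum_congr rfl fun k _ => ?_
    rw [Finset.mul_sum, Finset.mul_sum]
    refine Finset.sum_congr rfl fun i _ => ?_
    ring
  have hnpos : (0:ℝ) < 1 / (n : ℝ) := by positivity
  have hsum_le : ∀ k, (1 / (n:ℝ)) * ∑ i : Fin p, (s k * Real.log (1 + c / s k * B k i))
      ≤ (1 / (n:ℝ)) * ∑ i : Fin p, (t k * Real.log (1 + c / t k * A k i)) := fun k =>
    mul_le_mul_of_nonneg_left (Finset.sum_le_sum fun i _ => hterm k i) hnpos.le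
  have hmain : Rvar d n p K c Z π' US ≤ Rvar d n p K c Z π U := by
    rw [hrw π' US, hrw π U]
    exact mul_le_mul_of_nonneg_left (Finset.sum_le_sum fun k _ => hsum_le k) (by norm_num)
  refine ⟨hmain, fun R => by linarith, ?_⟩
  rintro ⟨k₀, i₀, hki⟩
  rw [hrw π' US, hrw π U]
  apply mul_lt_mul_of_pos_left _ (by norm_num : (0:ℝ) < 1/2)
  apply Finset.sum_lt_sum (fun k _ => hsum_le k)
  refine ⟨k₀, Finset.mem_univ _, ?_⟩
  apply mul_lt_mul_of_pos_left _ hnpos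
  apply Finset.sum_lt_sum (fun i _ => hterm k₀ i)
  exact ⟨i₀, Finset.mem_univ _,
    log_key_strict c hc (hs0 k₀) (hst k₀) (ht0 k₀) (hB0 k₀ i₀) hki⟩
end

section
/- Let Z ∈ ℝ^{d×n}, let π_1, …, π_K ∈ ℝ^n have nonnegative entries with n_k = Σ_j (π_k)_j > 0, let U_1, …, U_K ∈ ℝ^{d×p}, let ε > 0 and n, d positive integers. Then the subspace-projected coding rate is bounded by its variational form: (1/2) Σ_{k=1}^K (n_k/n) log det(I_p + (d/(ε² n_k)) U_kᵀ Z Diag(π_k) Zᵀ U_k) ≤ (1/2) Σ_{k=1}^K (n_k/n) Σ_{i=1}^p f((1/n_k)(U_kᵀ Z Diag(π_k) Zᵀ U_k)_{ii}), where f(x) = log(1 + (d/ε²) x). -/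
open Matrix

section Aux

private lemma trace_eq_sum_eigs' {m : ℕ} (A : Matrix (Fin m) (Fin m) ℝ) (hA : A.IsHermitian) :
    A.trace = ∑ i, hA.eigenvalues i := by
  simpa using hA.trace_eq_sum_eigenvalues

private lemma det_le_one_of_trace' {m : ℕ} (C : Matrix (Fin m) (Fin m) ℝ) (hC : C.PosSemidef)
    (htr : C.trace = (m : ℝ)) : C.det ≤ 1 := by
  have hdet := hC.1.det_eq_prod_eigenvalues
  have hnn := hC.eigenvalues_nonneg
  have htr2 := trace_eq_sum_eigs' C hC.1
  calc C.det = ∏ i, hC.1.eigenvalues i := by exact_mod_cast hdet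
    _ ≤ ∏ i, Real.exp (hC.1.eigenvalues i - 1) := by
        apply Finset.prod_le_prod (fun i _ => hnn i)
        intro i _
        have := Real.add_one_le_exp (hC.1.eigenvalues i - 1)
        linarith
    _ = Real.exp (∑ i, (hC.1.eigenvalues i - 1)) := by rw [Real.exp_sum]
    _ = 1 := by
        rw [Finset.sum_sub_distrib]
        simp only [Finset.sum_const, Finset.card_univ, Fintype.card_fin, nsmul_eq_mul, mul_one]
        rw [← htr2, htr]
        simp

/-- Hadamard-type inequality in log form: for a positive definite real matrix `B`,
`log det B ≤ ∑ i, log (B i i)`. -/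
private lemma logdet_le_sum_log_diag' {m : ℕ} (B : Matrix (Fin m) (Fin m) ℝ) (hB : B.PosDef) :
    Real.log B.det ≤ ∑ i, Real.log (B i i) := by
  classical
  have hdiag : ∀ i, 0 < B i i := fun i => by
    exact hB.diag_pos
  set v : Fin m → ℝ := fun i => (Real.sqrt (B i i))⁻¹ with hv
  have hvpos : ∀ i, 0 < v i := fun i => inv_pos.mpr (Real.sqrt_pos.mpr (hdiag i))
  set D : Matrix (Fin m) (Fin m) ℝ := diagonal v with hD
  have hDH : Dᴴ = D := by
    simp [hD, Matrix.diagonal_conjTranspose]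
  have hC : (D * B * D).PosSemidef := by
    have := hB.posSemidef.mul_mul_conjTranspose_same D
    rwa [hDH] at this
  have hCdiag : ∀ i, (D * B * D) i i = 1 := by
    intro i
    rw [hD]
    rw [Matrix.mul_diagonal, Matrix.diagonal_mul]
    have hs : Real.sqrt (B i i) * Real.sqrt (B i i) = B i i :=
      Real.mul_self_sqrt (hdiag i).le
    have hns : Real.sqrt (B i i) ≠ 0 := (Real.sqrt_pos.mpr (hdiag i)).ne'
    show (Real.sqrt (B i i))⁻¹ * B i i * (Real.sqrt (B i i))⁻¹ = 1
    rw [← hs]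
    field_simp
    rw [Real.sqrt_sq (Real.sqrt_nonneg _)]
  have htr : (D * B * D).trace = (m : ℝ) := by
    rw [Matrix.trace]
    simp only [Matrix.diag_apply, hCdiag]
    simp
  have hdet1 : (D * B * D).det ≤ 1 := det_le_one_of_trace' _ hC htr
  have hdetD : D.det = ∏ i, v i := by simp [hD]
  have hdetsplit : (D * B * D).det = (∏ i, v i) * B.det * (∏ i, v i) := by
    rw [Matrix.det_mul, Matrix.det_mul, hdetD]
  have hprodpos : 0 < ∏ i, v i := Finset.prod_pos (fun i _ => hvpos i)
  have hBdet : 0 < B.det := hB.det_pos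
  have hkey : B.det ≤ ∏ i, B i i := by
    have h1 : B.det * ((∏ i, v i) * (∏ i, v i)) ≤ 1 := by
      rw [← mul_assoc]
      calc B.det * (∏ i, v i) * (∏ i, v i)
          = (∏ i, v i) * B.det * (∏ i, v i) := by ring
        _ ≤ 1 := by rw [← hdetsplit]; exact hdet1
    have h2 : (∏ i, v i) * (∏ i, v i) = (∏ i, B i i)⁻¹ := by
      rw [← Finset.prod_mul_distrib, ← Finset.prod_inv_distrib]
      apply Finset.prod_congr rfl
      intro i _
      rw [hv]
      rw [← mul_inv]
      rw [Real.mul_self_sqrt (hdiag i).le]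
    rw [h2] at h1
    have hP : 0 < ∏ i, B i i := Finset.prod_pos (fun i _ => hdiag i)
    rw [← div_eq_mul_inv, div_le_one hP] at h1
    exact h1
  calc Real.log B.det ≤ Real.log (∏ i, B i i) :=
        Real.log_le_log hBdet hkey
    _ = ∑ i, Real.log (B i i) := Real.log_prod (fun i _ => (hdiag i).ne')

private lemma one_add_smul_posDef' {m : ℕ} (A : Matrix (Fin m) (Fin m) ℝ) (hA : A.PosSemidef)
    {c : ℝ} (hc : 0 ≤ c) : ((1 : Matrix (Fin m) (Fin m) ℝ) + c • A).PosDef := by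
  have h1 : (1 : Matrix (Fin m) (Fin m) ℝ).PosDef := by
    rw [← Matrix.diagonal_one]
    exact Matrix.posDef_diagonal_iff.mpr (fun i => one_pos)
  have hS : (c • A).PosSemidef := by
    constructor
    · show (c • A)ᴴ = c • A
      ext i j
      have h := congrFun (congrFun hA.1.eq i) j
      simp only [Matrix.conjTranspose_apply, star_trivial] at h
      simp [Matrix.conjTranspose_apply, h]
    · intro x
      exact (hA.smul hc).2 x
  exact h1.add_posSemidef hS

end Aux

/-- The subspace-projected coding rate is bounded by its variational
form: with `n_k = Σ_j (π_k)_j > 0` and `f(x) = log(1 + (d/ε²) x)`,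
`(1/2) Σ_k (n_k/n) log det(I_p + (d/(ε² n_k)) U_kᵀ Z Diag(π_k) Zᵀ U_k)
  ≤ (1/2) Σ_k (n_k/n) Σ_i f((1/n_k)(U_kᵀ Z Diag(π_k) Zᵀ U_k)_{ii})`. -/
theorem projected_coding_rate_le_variational (d n p K : ℕ) (hd : 0 < d) (hn : 0 < n)
    (Z : Matrix (Fin d) (Fin n) ℝ) (π : Fin K → Fin n → ℝ)
    (hπ : ∀ k j, 0 ≤ π k j) (hsum : ∀ k, 0 < ∑ j, π k j)
    (U : Fin K → Matrix (Fin d) (Fin p) ℝ) (ε : ℝ) (hε : 0 < ε) :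
    (1 / 2) * ∑ k : Fin K, ((∑ j, π k j) / (n : ℝ)) *
        Real.log ((1 : Matrix (Fin p) (Fin p) ℝ) +
          ((d : ℝ) / (ε ^ 2 * ∑ j, π k j)) •
            ((U k)ᵀ * Z * Matrix.diagonal (π k) * Zᵀ * U k)).det ≤
      (1 / 2) * ∑ k : Fin K, ((∑ j, π k j) / (n : ℝ)) *
        ∑ i : Fin p, Real.log (1 + ((d : ℝ) / ε ^ 2) *
          ((1 / ∑ j, π k j) *
            ((U k)ᵀ * Z * Matrix.diagonal (π k) * Zᵀ * U k) i i)) := by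
  apply mul_le_mul_of_nonneg_left _ (by norm_num : (0 : ℝ) ≤ 1 / 2)
  apply Finset.sum_le_sum
  intro k _
  apply mul_le_mul_of_nonneg_left _ (div_nonneg (hsum k).le (Nat.cast_nonneg n))
  set A : Matrix (Fin p) (Fin p) ℝ := (U k)ᵀ * Z * Matrix.diagonal (π k) * Zᵀ * U k with hAdef
  set nk : ℝ := ∑ j, π k j with hnk
  have hnkpos : 0 < nk := hsum k
  -- A is positive semidefinite
  have hA : A.PosSemidef := by
    have hdg : (Matrix.diagonal (π k)).PosSemidef :=
      Matrix.PosSemidef.diagonal (fun j => hπ k j)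
    have := hdg.conjTranspose_mul_mul_same (Zᵀ * U k)
    have heq : (Zᵀ * U k)ᴴ * Matrix.diagonal (π k) * (Zᵀ * U k) = A := by
      rw [hAdef]
      rw [Matrix.conjTranspose_mul]
      have hZ : (Zᵀ)ᴴ = Z := by
        ext i j; simp [Matrix.conjTranspose_apply]
      have hU : (U k)ᴴ = (U k)ᵀ := by
        ext i j; simp [Matrix.conjTranspose_apply]
      rw [hZ, hU]
      simp only [Matrix.mul_assoc]
    rwa [heq] at this
  set c : ℝ := (d : ℝ) / (ε ^ 2 * nk) with hc
  have hcnn : 0 ≤ c := by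
    apply div_nonneg (Nat.cast_nonneg d)
    positivity
  have hB := one_add_smul_posDef' A hA hcnn
  calc Real.log ((1 : Matrix (Fin p) (Fin p) ℝ) + c • A).det
      ≤ ∑ i, Real.log (((1 : Matrix (Fin p) (Fin p) ℝ) + c • A) i i) :=
        logdet_le_sum_log_diag' _ hB
    _ = ∑ i, Real.log (1 + ((d : ℝ) / ε ^ 2) * ((1 / nk) * A i i)) := by
        apply Finset.sum_congr rfl
        intro i _
        congr 1
        rw [Matrix.add_apply, Matrix.one_apply_eq, Matrix.smul_apply, smul_eq_mul]
        congr 1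
        rw [hc]
        field_simp
end
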